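/- Let G be a finite connected simple graph of genus g = |E(G)| − |V(G)| + 1 and let D be a divisor on G with deg(D) ≤ g − 1. Then D has rank r(D) ≥ 0 (i.e. D is equivalent to an effective divisor) if and only if D is equivalent to D_𝒪 for some sourceless partial orientation 𝒪 of G, where D_𝒪(v) = indeg_𝒪(v) − 1 for every vertex v. -/

import Mathlib

open Finset
open scoped Classical

namespace SimpleGraph

variable {V : Type*}

/-- A divisor `D : V → ℤ` is effective if all its values are nonnegative. -/
def Effective (D : V → ℤ) : Prop := ∀ v, 0 ≤ D v

/-- The Laplacian of `G` applied to `x : V → ℤ`: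
`(lap G x) v = deg(v)·x(v) − ∑_{u ~ v} x(u) = ∑_{u ~ v} (x v − x u)`. -/
noncomputable def lap [Fintype V] (G : SimpleGraph V) (x : V → ℤ) : V → ℤ :=
  fun v => ∑ u, if G.Adj v u then x v - x u else 0

/-- Two divisors are (linearly) equivalent if they differ by a Laplacian image. -/
def LinEquiv [Fintype V] (G : SimpleGraph V) (D D' : V → ℤ) : Prop :=
  ∃ x : V → ℤ, D - D' = G.lap x

/-- A divisor has positive rank if for every vertex `v`, subtracting one chip at `v`
yields a divisor equivalent to an effective divisor. -/
def PosRank [Fintype V] (G : SimpleGraph V) (D : V → ℤ) : Prop :=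
  ∀ v : V, ∃ E : V → ℤ, Effective E ∧
    G.LinEquiv (D - fun u => if u = v then (1 : ℤ) else 0) E

/-- The gonality of `G`: the minimum degree of an effective divisor of positive rank. -/
noncomputable def gonality [Fintype V] (G : SimpleGraph V) : ℕ :=
  sInf {n : ℕ | ∃ D : V → ℤ, Effective D ∧ G.PosRank D ∧ (∑ v, D v) = (n : ℤ)}

/-- The genus of `G`: `|E| − |V| + 1`. -/
noncomputable def genus [Fintype V] (G : SimpleGraph V) : ℤ :=
  (Nat.card G.edgeSet : ℤ) - (Fintype.card V : ℤ) + 1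

end SimpleGraph

/-!
If `D ~ E` with `E` effective, the degree bound says `∑ v, (E v + 1) ≤ |E(G)|`. For an effective
`y`, call `∑ v ∈ A, (y v + 1) - #(edges meeting A)` the surplus of `A`. When no set has positive
surplus, Hall's theorem gives every vertex `v` exactly `y v + 1` incoming edges, i.e. a partial
orientation `O` with `D_O = y`. Otherwise fire a set `S` of maximal surplus, of minimal size among
such sets. Minimality keeps the divisor effective. Writing twice the surplus as a modular function
minus the Laplacian form `𝟙_A ⬝ L 𝟙_A` makes it supermodular, so firing `S` creates no new sets
of maximal surplus. Connectivity makes `S` itself lose surplus, so the pair (maximal surplus,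
number of sets attaining it) decreases lexicographically. The converse holds because `D_O` is
effective when `O` is sourceless.
-/

lemma Finset.sum_eq_indicator_one_dotProduct {V : Type*} [Fintype V] (A : Finset V)
    (f : V → ℤ) : ∑ v ∈ A, f v = (A : Set V).indicator 1 ⬝ᵥ f := by
  simp [dotProduct, Set.indicator_apply]

lemma Finset.one_le_sum_boole {V : Type*} [Fintype V] {p : V → Prop} {u : V} (h : p u) :
    1 ≤ ∑ w, if p w then (1 : ℤ) else 0 := by
  rw [sum_boole, Nat.one_le_cast, one_le_card]
  exact ⟨u, by simpa using h⟩

namespace SimpleGraph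

variable {V : Type*} [Fintype V] (G : SimpleGraph V)

open Matrix

lemma lap_eq_lapMatrix_mulVec (x : V → ℤ) : G.lap x = G.lapMatrix ℤ *ᵥ x := by
  ext v
  rw [lapMatrix_mulVec_apply, lap, ← sum_filter, ← neighborFinset_eq_filter, sum_sub_distrib,
    sum_const, card_neighborFinset_eq_degree, nsmul_eq_mul]

lemma lap_add (x z : V → ℤ) : G.lap (x + z) = G.lap x + G.lap z := by
  simp only [lap_eq_lapMatrix_mulVec, mulVec_add]

lemma dotProduct_lap_comm (x z : V → ℤ) : x ⬝ᵥ G.lap z = z ⬝ᵥ G.lap x := by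
  rw [lap_eq_lapMatrix_mulVec, lap_eq_lapMatrix_mulVec, dotProduct_mulVec, ← mulVec_transpose,
    (G.isSymm_lapMatrix ℤ).eq, dotProduct_comm]

lemma sum_lap (x : V → ℤ) : ∑ v, G.lap x v = 0 := by
  have := G.dotProduct_lap_comm (fun _ => 1) x
  rw [lap_eq_lapMatrix_mulVec G (fun _ => 1), lapMatrix_mulVec_const_eq_zero] at this
  simpa [dotProduct] using this

variable {G}

lemma LinEquiv.refl (x : V → ℤ) : G.LinEquiv x x :=
  ⟨0, by rw [sub_self, lap_eq_lapMatrix_mulVec, mulVec_zero]⟩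

lemma LinEquiv.trans {x y z : V → ℤ} (hxy : G.LinEquiv x y) (hyz : G.LinEquiv y z) :
    G.LinEquiv x z := by
  obtain ⟨a, ha⟩ := hxy
  obtain ⟨b, hb⟩ := hyz
  exact ⟨a + b, by rw [lap_add, ← ha, ← hb, sub_add_sub_cancel]⟩

lemma LinEquiv.sum_eq {x y : V → ℤ} (h : G.LinEquiv x y) : ∑ v, x v = ∑ v, y v := by
  obtain ⟨a, ha⟩ := h
  have := congrArg (fun f => ∑ v, f v) ha
  simp only [Pi.sub_apply, sum_sub_distrib, sum_lap] at this
  linarith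

variable (G)

lemma lap_indicator_of_mem {T : Finset V} {v : V} (hv : v ∈ T) :
    G.lap ((T : Set V).indicator 1) v = #{u | G.Adj v u ∧ u ∉ T} := by
  rw [lap, natCast_card_filter]
  refine sum_congr rfl fun u _ => ?_
  by_cases hu : u ∈ T <;> by_cases h : G.Adj v u <;> simp [h, hu, hv]

lemma lap_indicator_of_notMem {T : Finset V} {v : V} (hv : v ∉ T) :
    G.lap ((T : Set V).indicator 1) v = -#{u | G.Adj v u ∧ u ∈ T} := by
  rw [lap, natCast_card_filter, ← sum_neg_distrib]
  refine sum_congr rfl fun u _ => ?_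
  by_cases hu : u ∈ T <;> by_cases h : G.Adj v u <;> simp [h, hu, hv]

/-- `𝟙_A ⬝ L 𝟙_T`, the number of chips that `A` loses when `T` fires. -/
noncomputable def lapPairing (A T : Finset V) : ℤ :=
  ∑ v ∈ A, G.lap ((T : Set V).indicator 1) v

lemma lapPairing_union_add_inter (A S T : Finset V) :
    G.lapPairing (A ∪ S) T + G.lapPairing (A ∩ S) T = G.lapPairing A T + G.lapPairing S T :=
  sum_union_inter

lemma lapPairing_comm (A T : Finset V) : G.lapPairing A T = G.lapPairing T A := by
  simp only [lapPairing, sum_eq_indicator_one_dotProduct, dotProduct_lap_comm]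

lemma lapPairing_univ_left (T : Finset V) : G.lapPairing univ T = 0 :=
  G.sum_lap _

lemma lapPairing_erase_add_singleton {A : Finset V} {v : V} (hv : v ∈ A) (T : Finset V) :
    G.lapPairing (A.erase v) T + G.lapPairing {v} T = G.lapPairing A T := by
  rw [lapPairing, lapPairing, lapPairing, sum_singleton, sum_erase_add _ _ hv]

lemma lapPairing_singleton_self (v : V) : G.lapPairing {v} {v} = G.degree v := by
  rw [lapPairing, sum_singleton, G.lap_indicator_of_mem (mem_singleton_self v),
    ← card_neighborFinset_eq_degree, neighborFinset_eq_filter]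
  congr 3
  ext u
  simpa using fun h => h.ne'

lemma lapPairing_nonneg {A T : Finset V} (h : A ⊆ T) : 0 ≤ G.lapPairing A T :=
  sum_nonneg fun _ hv => by simp [G.lap_indicator_of_mem (h hv)]

lemma one_le_lapPairing_self (hG : G.Connected) {S : Finset V} (hne : S.Nonempty)
    (hS : S ≠ univ) : 1 ≤ G.lapPairing S S := by
  obtain ⟨a, ha⟩ := hne
  obtain ⟨b, hb⟩ : ∃ b, b ∉ S := by
    by_contra! h
    exact hS (eq_univ_of_forall h)
  obtain ⟨d, -, hd, hd'⟩ := (hG.preconnected a b).some.exists_boundary_dart S ha hb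
  rw [mem_coe] at hd hd'
  calc 1 ≤ G.lap ((S : Set V).indicator 1) d.fst := by
        rw [G.lap_indicator_of_mem hd, Nat.one_le_cast, one_le_card]
        exact ⟨d.snd, by simp [d.adj, hd']⟩
    _ ≤ G.lapPairing S S :=
        single_le_sum (fun _ hv => by simp [G.lap_indicator_of_mem hv]) hd

lemma lapPairing_union_self_add_inter_self (A S : Finset V) :
    G.lapPairing (A ∪ S) (A ∪ S) + G.lapPairing (A ∩ S) (A ∩ S) =
      G.lapPairing A A + G.lapPairing S S + 2 * G.lapPairing A S -
        2 * G.lapPairing (A ∩ S) (A ∪ S) := by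
  linarith [G.lapPairing_union_add_inter A S (A ∪ S), G.lapPairing_union_add_inter A S (A ∩ S),
    G.lapPairing_union_add_inter A S A, G.lapPairing_union_add_inter A S S,
    G.lapPairing_comm (A ∩ S) (A ∪ S), G.lapPairing_comm A (A ∪ S),
    G.lapPairing_comm S (A ∪ S), G.lapPairing_comm A (A ∩ S), G.lapPairing_comm S (A ∩ S),
    G.lapPairing_comm S A]

lemma edgeFinset_inf_fromRel_eq_biUnion_incidenceFinset (A : Finset V) :
    (G ⊓ fromRel fun u _ => u ∈ A).edgeFinset = A.biUnion fun v => G.incidenceFinset v := by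
  ext e
  induction e using Sym2.ind with
  | _ a b =>
    simp only [mem_edgeFinset, mem_edgeSet, inf_adj, fromRel_adj, mem_biUnion,
      mem_incidenceFinset]
    constructor
    · rintro ⟨h, -, ha | hb⟩
      exacts [⟨a, ha, h, Sym2.mem_mk_left a b⟩, ⟨b, hb, h, Sym2.mem_mk_right a b⟩]
    · rintro ⟨v, hv, h, hmem⟩
      rcases Sym2.mem_iff.1 hmem with rfl | rfl
      exacts [⟨h, h.ne, .inl hv⟩, ⟨h, h.ne, .inr hv⟩]

lemma two_mul_card_biUnion_incidenceFinset (A : Finset V) :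
    2 * (#(A.biUnion fun v => G.incidenceFinset v) : ℤ) =
      ∑ v ∈ A, (G.degree v : ℤ) + G.lapPairing A A := by
  -- degree sum in the subgraph of the edges meeting `A`
  let H : SimpleGraph V := G ⊓ fromRel fun u _ => u ∈ A
  have hdeg_mem : ∀ v ∈ A, (H.degree v : ℤ) = G.degree v := by
    intro v hv
    rw [← card_neighborFinset_eq_degree, ← card_neighborFinset_eq_degree]
    congr 2
    ext u
    simpa [H, hv] using fun h => h.ne
  have hdeg_notMem : ∀ v ∉ A, (H.degree v : ℤ) = -G.lap ((A : Set V).indicator 1) v := by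
    intro v hv
    rw [G.lap_indicator_of_notMem hv, neg_neg, ← card_neighborFinset_eq_degree,
      neighborFinset_eq_filter]
    congr 2
    ext u
    simpa [H, hv] using fun h _ => h.ne
  have hcompl : G.lapPairing A A + ∑ v ∈ Aᶜ, G.lap ((A : Set V).indicator 1) v = 0 :=
    (sum_add_sum_compl A _).trans (G.sum_lap _)
  have hsum : ∑ v, (H.degree v : ℤ) = 2 * #H.edgeFinset := by
    exact_mod_cast (by convert H.sum_degrees_eq_twice_card_edges :
      ∑ v, H.degree v = 2 * #H.edgeFinset)
  rw [← G.edgeFinset_inf_fromRel_eq_biUnion_incidenceFinset A, ← hsum, ← sum_add_sum_compl A, sum_congr rfl hdeg_mem,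
    sum_congr rfl fun v hv => hdeg_notMem v (mem_compl.1 hv), sum_neg_distrib]
  linarith

/-- `surplus y A ≤ 0` for all `A` is Hall's condition for choosing, at every vertex `v`,
`y v + 1` distinct edges at `v`. -/
noncomputable def surplus (y : V → ℤ) (A : Finset V) : ℤ :=
  ∑ v ∈ A, (y v + 1) - #(A.biUnion fun v => G.incidenceFinset v)

noncomputable def fire (S : Finset V) (y : V → ℤ) : V → ℤ :=
  y - G.lap ((S : Set V).indicator 1)

lemma linEquiv_fire (S : Finset V) (y : V → ℤ) : G.LinEquiv y (G.fire S y) :=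
  ⟨_, sub_sub_cancel _ _⟩

lemma two_mul_surplus (y : V → ℤ) (A : Finset V) :
    2 * G.surplus y A = ∑ v ∈ A, (2 * (y v + 1) - G.degree v) - G.lapPairing A A := by
  rw [surplus, mul_sub, G.two_mul_card_biUnion_incidenceFinset, mul_sum, sum_sub_distrib]
  ring

lemma surplus_empty (y : V → ℤ) : G.surplus y ∅ = 0 := by
  simp [surplus]

lemma surplus_univ (y : V → ℤ) : G.surplus y univ = ∑ v, y v - G.genus + 1 := by
  have h := G.two_mul_surplus y univ
  rw [lapPairing_univ_left, sum_sub_distrib, ← mul_sum, ← Nat.cast_sum,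
    sum_degrees_eq_twice_card_edges] at h
  rw [genus, Nat.card_eq_fintype_card, ← edgeFinset_card]
  simp only [sum_add_distrib, sum_const, card_univ, nsmul_eq_mul, mul_one] at h
  push_cast at h
  linarith

lemma surplus_fire (S : Finset V) (y : V → ℤ) (A : Finset V) :
    G.surplus (G.fire S y) A = G.surplus y A - G.lapPairing A S := by
  simp only [surplus, fire, lapPairing, Pi.sub_apply, sub_add_eq_add_sub, sum_sub_distrib]
  ring

lemma surplus_fire_add_le (S : Finset V) (y : V → ℤ) (A : Finset V) :
    G.surplus (G.fire S y) A + G.surplus y S ≤ G.surplus y (A ∪ S) + G.surplus y (A ∩ S) := by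
  rw [surplus_fire]
  linarith [sum_union_inter (s₁ := A) (s₂ := S) (f := fun v => 2 * (y v + 1) - G.degree v),
    G.two_mul_surplus y A, G.two_mul_surplus y S, G.two_mul_surplus y (A ∪ S),
    G.two_mul_surplus y (A ∩ S), G.lapPairing_union_self_add_inter_self A S,
    G.lapPairing_nonneg (inter_subset_left.trans subset_union_left : A ∩ S ⊆ A ∪ S)]

lemma surplus_eq_surplus_erase_add {S : Finset V} {v : V} (hv : v ∈ S) (y : V → ℤ) :
    G.surplus y S = G.surplus y (S.erase v) + G.fire S y v + 1 := by
  have hfire : G.fire S y v = y v - G.lapPairing {v} S := by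
    rw [fire, lapPairing, sum_singleton, Pi.sub_apply]
  rw [hfire]
  linarith [sum_erase_add S (fun v => 2 * (y v + 1) - G.degree v) hv, G.two_mul_surplus y S,
    G.two_mul_surplus y (S.erase v), G.lapPairing_erase_add_singleton hv S,
    G.lapPairing_erase_add_singleton hv (S.erase v), G.lapPairing_erase_add_singleton hv {v},
    G.lapPairing_comm (S.erase v) S, G.lapPairing_comm (S.erase v) {v},
    G.lapPairing_comm S {v}, G.lapPairing_singleton_self v]

noncomputable def maxSurplus (y : V → ℤ) : ℤ :=
  univ.sup' univ_nonempty (G.surplus y)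

noncomputable def surplusMaximizers (y : V → ℤ) : Finset (Finset V) :=
  {A | G.surplus y A = G.maxSurplus y}

lemma surplus_le_maxSurplus (y : V → ℤ) (A : Finset V) : G.surplus y A ≤ G.maxSurplus y :=
  le_sup' _ (mem_univ A)

lemma surplusMaximizers_nonempty (y : V → ℤ) : (G.surplusMaximizers y).Nonempty := by
  obtain ⟨A, -, hA⟩ := exists_mem_eq_sup' univ_nonempty (G.surplus y)
  exact ⟨A, mem_filter.2 ⟨mem_univ A, hA.symm⟩⟩

variable {G}

section MinimalMaximizer

variable {y : V → ℤ} {S : Finset V}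

lemma surplus_lt_maxSurplus_of_ssubset (hSmin : ∀ A ∈ G.surplusMaximizers y, #S ≤ #A)
    {A : Finset V} (hA : A ⊂ S) : G.surplus y A < G.maxSurplus y :=
  (G.surplus_le_maxSurplus y A).lt_of_ne fun h =>
    (card_lt_card hA).not_ge (hSmin A (mem_filter.2 ⟨mem_univ A, h⟩))

lemma effective_fire_of_minimal (hS : S ∈ G.surplusMaximizers y)
    (hSmin : ∀ A ∈ G.surplusMaximizers y, #S ≤ #A) (hy : Effective y) :
    Effective (G.fire S y) := by
  intro v
  by_cases hv : v ∈ S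
  · have h := G.surplus_eq_surplus_erase_add hv y
    have := surplus_lt_maxSurplus_of_ssubset hSmin (erase_ssubset hv)
    rw [(mem_filter.1 hS).2] at h
    omega
  · have := G.lap_indicator_of_notMem hv
    have := hy v
    simp only [fire, Pi.sub_apply]
    omega

lemma surplus_fire_of_minimal (hS : S ∈ G.surplusMaximizers y)
    (hSmin : ∀ A ∈ G.surplusMaximizers y, #S ≤ #A) (A : Finset V) :
    G.surplus (G.fire S y) A ≤ G.maxSurplus y ∧
      (G.surplus (G.fire S y) A = G.maxSurplus y → A ∈ G.surplusMaximizers y) := by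
  have hfire := G.surplus_fire_add_le S y A
  have hunion := G.surplus_le_maxSurplus y (A ∪ S)
  have hinter := G.surplus_le_maxSurplus y (A ∩ S)
  rw [(mem_filter.1 hS).2] at hfire
  refine ⟨by linarith, fun h => ?_⟩
  have hSA : S ⊆ A := by
    by_contra hSA
    have := surplus_lt_maxSurplus_of_ssubset hSmin
      (ssubset_of_subset_of_ne inter_subset_right (mt inter_eq_right.1 hSA))
    linarith
  rw [union_eq_left.2 hSA] at hunion hfire
  exact mem_filter.2 ⟨mem_univ A, by linarith⟩

lemma fire_lt_of_minimal (hG : G.Connected) (hS : S ∈ G.surplusMaximizers y)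
    (hSmin : ∀ A ∈ G.surplusMaximizers y, #S ≤ #A) (huniv : G.surplus y univ ≤ 0)
    (hpos : 0 < G.maxSurplus y) :
    Prod.Lex (· < ·) (· < ·)
      ((G.maxSurplus (G.fire S y)).toNat, #(G.surplusMaximizers (G.fire S y)))
      ((G.maxSurplus y).toNat, #(G.surplusMaximizers y)) := by
  have hSmax := (mem_filter.1 hS).2
  have hle : G.maxSurplus (G.fire S y) ≤ G.maxSurplus y :=
    sup'_le _ _ fun A _ => (surplus_fire_of_minimal hS hSmin A).1
  have hne : S.Nonempty := nonempty_iff_ne_empty.2 fun h => by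
    rw [h, surplus_empty] at hSmax
    omega
  have hne_univ : S ≠ univ := fun h => by
    rw [h] at hSmax
    omega
  have hdrop : G.surplus (G.fire S y) S < G.maxSurplus y := by
    rw [surplus_fire, hSmax]
    linarith [G.one_le_lapPairing_self hG hne hne_univ]
  rcases hle.lt_or_eq with hlt | heq
  · exact .left _ _ (by omega)
  · rw [heq]
    refine .right _ (card_lt_card ⟨fun A hA => ?_, fun h => ?_⟩)
    · exact (surplus_fire_of_minimal hS hSmin A).2 (heq ▸ (mem_filter.1 hA).2)
    · exact hdrop.ne (heq ▸ (mem_filter.1 (h hS)).2)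

end MinimalMaximizer

theorem exists_linEquiv_forall_surplus_nonpos (hG : G.Connected) (y : V → ℤ) (hy : Effective y)
    (huniv : G.surplus y univ ≤ 0) :
    ∃ z, Effective z ∧ G.LinEquiv y z ∧ ∀ A, G.surplus z A ≤ 0 := by
  by_cases hpos : G.maxSurplus y ≤ 0
  · exact ⟨y, hy, .refl y, fun A => (G.surplus_le_maxSurplus y A).trans hpos⟩
  obtain ⟨S, hS, hSmin⟩ := exists_min_image _ card (G.surplusMaximizers_nonempty y)
  have hlt := fire_lt_of_minimal hG hS hSmin huniv (not_le.1 hpos)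
  obtain ⟨z, hz, hyz, hzA⟩ := exists_linEquiv_forall_surplus_nonpos hG (G.fire S y)
    (effective_fire_of_minimal hS hSmin hy)
    (by rwa [surplus_fire, lapPairing_univ_left, sub_zero])
  exact ⟨z, hz, (G.linEquiv_fire S y).trans hyz, hzA⟩
termination_by ((G.maxSurplus y).toNat, #(G.surplusMaximizers y))
decreasing_by exact hlt

theorem exists_orientation_indegree_eq {y : V → ℤ} (hy : Effective y)
    (h : ∀ A, G.surplus y A ≤ 0) :
    ∃ O : V → V → Prop, (∀ u v, O u v → G.Adj u v) ∧ (∀ u v, O u v → ¬ O v u) ∧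
      ∀ v, (∑ u, if O u v then (1 : ℤ) else 0) = y v + 1 := by
  -- vertex `v` has `y v + 1` slots, to be filled injectively by edges at `v`
  let t : (Σ v, Fin (y v + 1).toNat) → Finset (Sym2 V) := fun p => G.incidenceFinset p.1
  have hall : ∀ s, #s ≤ #(s.biUnion t) := by
    intro s
    set A := s.image Sigma.fst
    have hA := h A
    rw [surplus, sub_nonpos] at hA
    calc #s ≤ #(A.sigma fun v => (univ : Finset (Fin (y v + 1).toNat))) :=
          card_le_card fun p hp => mem_sigma.2 ⟨mem_image_of_mem _ hp, mem_univ _⟩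
      _ = ∑ v ∈ A, (y v + 1).toNat := by simp
      _ ≤ #(A.biUnion fun v => G.incidenceFinset v) := by
          have hcast : ((∑ v ∈ A, (y v + 1).toNat : ℕ) : ℤ) = ∑ v ∈ A, (y v + 1) := by
            push_cast
            exact sum_congr rfl fun v _ => Int.toNat_of_nonneg (by linarith [hy v])
          omega
      _ = #(s.biUnion t) := by rw [image_biUnion]
  obtain ⟨f, hf, hft⟩ := (all_card_le_biUnion_card_iff_exists_injective t).1 hall
  have hmem : ∀ p, p.1 ∈ f p := fun p => ((mem_incidenceFinset _ _ _).1 (hft p)).2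
  have hadj : ∀ u v i, f ⟨v, i⟩ = s(v, u) → G.Adj u v := fun u v i hi => by
    have := ((mem_incidenceFinset _ _ _).1 (hft ⟨v, i⟩)).1
    rw [hi] at this
    exact this.symm
  refine ⟨fun u v => ∃ i, f ⟨v, i⟩ = s(v, u), fun u v ⟨i, hi⟩ => hadj u v i hi,
    fun u v ⟨i, hi⟩ ⟨j, hj⟩ => ?_, fun v => ?_⟩
  · have := congrArg Sigma.fst (hf (hi.trans (hj.trans Sym2.eq_swap).symm))
    exact (hadj u v i hi).ne this.symm
  · let g : Fin (y v + 1).toNat → V := fun i => Sym2.Mem.other (hmem ⟨v, i⟩)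
    have hg : ∀ i, f ⟨v, i⟩ = s(v, g i) := fun i => (Sym2.other_spec _).symm
    have himage : ({u | ∃ i, f ⟨v, i⟩ = s(v, u)} : Finset V) = univ.image g := by
      ext u
      simp only [mem_filter, mem_univ, true_and, mem_image, hg, Sym2.congr_right, eq_comm]
    have hinj : Function.Injective g := fun i j hij =>
      eq_of_heq (Sigma.mk.inj_iff.1 (hf ((hg i).trans (hij ▸ (hg j).symm)))).2
    have hcard := card_image_of_injective univ hinj
    rw [← himage, card_univ, Fintype.card_fin] at hcard
    rw [← Int.toNat_of_nonneg (by linarith [hy v] : 0 ≤ y v + 1), ← hcard]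
    convert (natCast_card_filter _ _).symm

end SimpleGraph

open SimpleGraph

/-- A divisor of degree at most `g − 1` is equivalent to an effective divisor (i.e. has
rank `≥ 0`) if and only if it is equivalent to `D_𝒪` for some sourceless partial
orientation `𝒪`, where `D_𝒪(v) = indeg_𝒪(v) − 1`. -/
theorem equiv_effective_iff_sourceless_partial_orientation {V : Type*} [Fintype V]
    (G : SimpleGraph V) (hG : G.Connected) (D : V → ℤ)
    (hdeg : (∑ v, D v) ≤ G.genus - 1) :
    (∃ E : V → ℤ, Effective E ∧ G.LinEquiv D E) ↔
      ∃ O : V → V → Prop,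
        (∀ u v, O u v → G.Adj u v) ∧
        (∀ u v, O u v → ¬ O v u) ∧
        (∀ v, ∃ u, O u v) ∧
        G.LinEquiv D (fun v => (∑ u, if O u v then (1 : ℤ) else 0) - 1) := by
  constructor
  · rintro ⟨E, hE, hDE⟩
    have huniv : G.surplus E univ ≤ 0 := by
      rw [surplus_univ, ← hDE.sum_eq]
      linarith
    obtain ⟨y, hy, hEy, hsurplus⟩ := exists_linEquiv_forall_surplus_nonpos hG E hE huniv
    obtain ⟨O, hadj, hasymm, hindeg⟩ := exists_orientation_indegree_eq hy hsurplus
    refine ⟨O, hadj, hasymm, fun v => ?_, ?_⟩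
    · obtain ⟨u, -, hu⟩ := exists_ne_zero_of_sum_ne_zero (by rw [hindeg v]; linarith [hy v])
      exact ⟨u, by_contra fun h => hu (if_neg h)⟩
    · convert hDE.trans hEy using 2 with v
      rw [hindeg]
      ring
  · rintro ⟨O, -, -, hsource, hD⟩
    refine ⟨_, fun v => ?_, hD⟩
    obtain ⟨u, hu⟩ := hsource v
    linarith [one_le_sum_boole (p := (O · v)) hu]
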